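/- arXiv:2410.18915 — 2 statements merged into one kernel-verified Lean document; each statement's English description precedes it below -/
import Mathlib

section
/- Let n ≥ 1 be an integer, ε ∈ (0,1), and m := ⌈10n/ε⌉. For any probability distribution p over ℕ, let Ŝ : (Fin m → ℕ) → ℕ map a tuple of samples to the number of distinct values occurring in it. Then under the product measure p^⊗m, with probability at least 3/4 one has min{eff_ε(p), n} ≤ Ŝ ≤ |supp(p)|; moreover the upper bound Ŝ ≤ |supp(p)| holds almost surely. -/
open MeasureTheory

/-- A probability distribution over `ℕ`: a nonnegative sequence summing to `1`. -/
def IsDist (p : ℕ → ℝ) : Prop := (∀ i, 0 ≤ p i) ∧ ∑' i, p i = 1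

/-- Total variation distance `(1/2)·Σᵢ|p_i − q_i|`. -/
noncomputable def dTV (p q : ℕ → ℝ) : ℝ := (1 / 2) * ∑' i, |p i - q i|

/-- The `ε`-effective support size: the least `k` such that some distribution `q` with
`|supp(q)| = k` has `d_TV(p,q) ≤ ε`. -/
noncomputable def eff (ε : ℝ) (p : ℕ → ℝ) : ℕ :=
  sInf {k : ℕ | ∃ q : ℕ → ℝ, IsDist q ∧ {i | q i ≠ 0}.encard = k ∧ dTV p q ≤ ε}

/-- The Borel measure on `ℕ` induced by the sequence `p`. -/
noncomputable def distMeasure (p : ℕ → ℝ) : Measure ℕ :=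
  Measure.sum fun i => ENNReal.ofReal (p i) • Measure.dirac i

/-! ### Auxiliary definitions and lemmas -/

open scoped ENNReal

/-- Mass outside a finite set. -/
noncomputable def outM (p : ℕ → ℝ) (A : Finset ℕ) : ℝ := 1 - ∑ i ∈ A, p i

open scoped Classical in
/-- Count of samples that either are new or occur when the unseen mass is already `≤ ε`. -/
noncomputable def newCount (ε : ℝ) (p : ℕ → ℝ) : Finset ℕ → List ℕ → ℕ
  | _, [] => 0
  | A, x :: t => (if x ∉ A ∨ outM p A ≤ ε then 1 else 0) + newCount ε p (insert x A) t

lemma summable_of_dist {p : ℕ → ℝ} (h1 : ∑' i, p i = 1) : Summable p := by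
  by_contra hs
  rw [tsum_eq_zero_of_not_summable hs] at h1
  norm_num at h1

lemma distMeasure_singleton (p : ℕ → ℝ) (x : ℕ) :
    distMeasure p {x} = ENNReal.ofReal (p x) := by
  rw [distMeasure, Measure.sum_apply _ (measurableSet_singleton x)]
  rw [tsum_eq_single x]
  · simp
  · intro b hb
    simp [Measure.dirac_apply' _ (measurableSet_singleton x), Set.indicator, hb]

lemma distMeasure_univ (p : ℕ → ℝ) (h0 : ∀ i, 0 ≤ p i) (h1 : ∑' i, p i = 1) :
    distMeasure p Set.univ = 1 := by
  rw [distMeasure, Measure.sum_apply _ MeasurableSet.univ]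
  simp only [Measure.smul_apply, Measure.dirac_apply' _ MeasurableSet.univ, smul_eq_mul]
  simp only [Set.indicator_univ, Pi.one_apply, mul_one]
  rw [← ENNReal.ofReal_tsum_of_nonneg h0 (summable_of_dist h1), h1, ENNReal.ofReal_one]

lemma measure_eq_tsum' {α : Type*} [MeasurableSpace α] [MeasurableSingletonClass α]
    [Countable α] (μ : Measure α) (S : Set α) :
    μ S = ∑' x : S, μ {(x : α)} := by
  conv_lhs => rw [← Set.biUnion_of_singleton S]
  rw [measure_biUnion S.to_countable (fun x _ y _ hxy => by simp [Set.disjoint_singleton, hxy])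
    (fun x _ => measurableSet_singleton x)]

lemma pi_singleton {m : ℕ} (μ : Measure ℕ) [SigmaFinite μ] (s : Fin m → ℕ) :
    Measure.pi (fun _ : Fin m => μ) {s} = ∏ j, μ {s j} := by
  rw [← Set.univ_pi_singleton, Measure.pi_pi]

lemma outM_anti (p : ℕ → ℝ) (h0 : ∀ i, 0 ≤ p i) {A B : Finset ℕ} (h : A ⊆ B) :
    outM p B ≤ outM p A := by
  unfold outM
  have := Finset.sum_le_sum_of_subset_of_nonneg h (fun i _ _ => h0 i)
  linarith

lemma newCount_eq (ε : ℝ) (p : ℕ → ℝ) (h0 : ∀ i, 0 ≤ p i) :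
    ∀ (l : List ℕ) (A : Finset ℕ), ε < outM p (A ∪ l.toFinset) →
      newCount ε p A l + A.card = (A ∪ l.toFinset).card := by
  intro l
  induction l with
  | nil => intro A h; simp [newCount]
  | cons x t ih =>
    intro A h
    have hu : A ∪ (x :: t).toFinset = insert x A ∪ t.toFinset := by
      ext i; simp [Finset.mem_union, Finset.mem_insert, or_assoc, or_left_comm, or_comm]
    rw [hu] at h ⊢
    have hsub : A ⊆ insert x A ∪ t.toFinset := by
      intro i hi; exact Finset.mem_union_left _ (Finset.mem_insert_of_mem hi)
    have hout : ε < outM p A := lt_of_lt_of_le h (outM_anti p h0 hsub)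
    rw [newCount]
    have ih' := ih (insert x A) h
    by_cases hx : x ∈ A
    · have : (if x ∉ A ∨ outM p A ≤ ε then 1 else 0) = 0 := by
        rw [if_neg]; push_neg; exact ⟨hx, hout⟩
      rw [this, Finset.insert_eq_self.mpr hx] at *
      omega
    · have : (if x ∉ A ∨ outM p A ≤ ε then 1 else 0) = 1 := if_pos (Or.inl hx)
      rw [this]
      rw [Finset.card_insert_of_notMem hx] at ih'
      omega

lemma step_lemma {ε : ℝ} {p : ℕ → ℝ} (hε0 : 0 < ε) (hε1 : ε < 1) (h0 : ∀ i, 0 ≤ p i)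
    (h1 : ∑' i, p i = 1) (A : Finset ℕ) :
    (∑' x : ℕ, ENNReal.ofReal (p x) *
        (2⁻¹ : ℝ≥0∞) ^ (if x ∉ A ∨ outM p A ≤ ε then 1 else 0)) ≤
      ENNReal.ofReal (1 - ε / 2) := by
  classical
  have hsum : Summable p := summable_of_dist h1
  set g : ℕ → ℝ := fun x => if x ∉ A ∨ outM p A ≤ ε then p x / 2 else p x with hg
  have hterm : ∀ x, ENNReal.ofReal (p x) *
      (2⁻¹ : ℝ≥0∞) ^ (if x ∉ A ∨ outM p A ≤ ε then 1 else 0) = ENNReal.ofReal (g x) := by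
    intro x
    by_cases h : x ∉ A ∨ outM p A ≤ ε
    · simp only [hg, if_pos h, pow_one]
      rw [show ((2:ℝ≥0∞)⁻¹) = ENNReal.ofReal (1/2) by
        rw [ENNReal.ofReal_div_of_pos] <;> norm_num]
      rw [← ENNReal.ofReal_mul (h0 x)]
      congr 1; ring
    · simp [hg, if_neg h]
  simp_rw [hterm]
  have hgnn : ∀ x, 0 ≤ g x := by
    intro x
    by_cases h : x ∉ A ∨ outM p A ≤ ε
    · simp only [hg, if_pos h]; linarith [h0 x]
    · simp only [hg, if_neg h]; exact h0 x
  have hgle : ∀ x, g x ≤ p x := by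
    intro x; by_cases h : x ∉ A ∨ outM p A ≤ ε <;> simp [hg, h] <;> linarith [h0 x]
  have hgsum : Summable g := Summable.of_nonneg_of_le hgnn hgle hsum
  rw [← ENNReal.ofReal_tsum_of_nonneg hgnn hgsum]
  apply ENNReal.ofReal_le_ofReal
  by_cases hout : outM p A ≤ ε
  · have : g = fun x => p x / 2 := by funext x; simp [hg, hout]
    rw [this, tsum_div_const, h1]
    linarith
  · have : g = fun x => p x / 2 + (if x ∈ A then p x / 2 else 0) := by
      funext x
      by_cases hx : x ∈ A
      · have hcond : ¬(x ∉ A ∨ outM p A ≤ ε) := by push_neg; exact ⟨hx, not_le.mp hout⟩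
        simp only [hg, if_neg hcond, if_pos hx]
        ring
      · simp [hg, hx]
    rw [this]
    have hind : Summable (fun x => if x ∈ A then p x / 2 else 0) :=
      summable_of_ne_finset_zero (s := A) (fun x hx => by simp [hx])
    rw [Summable.tsum_add (hsum.div_const 2) hind, tsum_div_const, h1,
      tsum_eq_sum (s := A) (fun x hx => by simp [hx])]
    have hsA : (∑ x ∈ A, if x ∈ A then p x / 2 else 0) = (1 - outM p A) / 2 := by
      rw [Finset.sum_congr rfl (fun x hx => if_pos hx), outM]
      rw [eq_div_iff (by norm_num : (2:ℝ) ≠ 0), Finset.sum_mul]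
      simp only [div_mul_cancel₀ _ (by norm_num : (2:ℝ) ≠ 0)]
      ring
    rw [hsA]
    have := not_le.mp hout
    linarith

lemma main_bound {ε : ℝ} {p : ℕ → ℝ} (hε0 : 0 < ε) (hε1 : ε < 1) (h0 : ∀ i, 0 ≤ p i)
    (h1 : ∑' i, p i = 1) :
    ∀ (r : ℕ) (A : Finset ℕ),
      (∑' s : Fin r → ℕ, (∏ j, ENNReal.ofReal (p (s j))) *
          (2⁻¹ : ℝ≥0∞) ^ (newCount ε p A (List.ofFn s))) ≤
        (ENNReal.ofReal (1 - ε / 2)) ^ r := by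
  classical
  intro r
  induction r with
  | zero =>
    intro A
    rw [tsum_eq_single (default : Fin 0 → ℕ) (fun b hb => absurd (Subsingleton.elim b default) hb)]
    simp [newCount]
  | succ r ih =>
    intro A
    rw [← (Fin.consEquiv (fun _ : Fin (r+1) => ℕ)).tsum_eq]
    rw [ENNReal.tsum_prod']
    have hterm : ∀ (x : ℕ) (t : Fin r → ℕ),
        (∏ j, ENNReal.ofReal (p (Fin.consEquiv (fun _ : Fin (r+1) => ℕ) (x, t) j))) *
          (2⁻¹ : ℝ≥0∞) ^ (newCount ε p A (List.ofFn (Fin.consEquiv (fun _ : Fin (r+1) => ℕ) (x, t)))) =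
        (ENNReal.ofReal (p x) * (2⁻¹ : ℝ≥0∞) ^ (if x ∉ A ∨ outM p A ≤ ε then 1 else 0)) *
          ((∏ j, ENNReal.ofReal (p (t j))) * (2⁻¹ : ℝ≥0∞) ^ (newCount ε p (insert x A) (List.ofFn t))) := by
      intro x t
      have hc : (Fin.consEquiv (fun _ : Fin (r+1) => ℕ) (x, t)) = Fin.cons x t := rfl
      rw [hc]
      rw [Fin.prod_univ_succ]
      simp only [Fin.cons_zero, Fin.cons_succ]
      rw [List.ofFn_succ]
      simp only [Fin.cons_zero, Fin.cons_succ]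
      rw [newCount, pow_add]
      ring
    simp_rw [hterm]
    simp_rw [ENNReal.tsum_mul_left]
    calc ∑' (x : ℕ), (ENNReal.ofReal (p x) * (2⁻¹:ℝ≥0∞) ^ (if x ∉ A ∨ outM p A ≤ ε then 1 else 0)) *
          ∑' (t : Fin r → ℕ), (∏ j, ENNReal.ofReal (p (t j))) * (2⁻¹:ℝ≥0∞) ^ (newCount ε p (insert x A) (List.ofFn t))
        ≤ ∑' (x : ℕ), (ENNReal.ofReal (p x) * (2⁻¹:ℝ≥0∞) ^ (if x ∉ A ∨ outM p A ≤ ε then 1 else 0)) *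
          (ENNReal.ofReal (1 - ε / 2)) ^ r := by
          exact ENNReal.tsum_le_tsum (fun x => mul_le_mul_right (ih (insert x A)) _)
      _ = (∑' (x : ℕ), ENNReal.ofReal (p x) * (2⁻¹:ℝ≥0∞) ^ (if x ∉ A ∨ outM p A ≤ ε then 1 else 0)) *
          (ENNReal.ofReal (1 - ε / 2)) ^ r := ENNReal.tsum_mul_right
      _ ≤ (ENNReal.ofReal (1 - ε / 2)) * (ENNReal.ofReal (1 - ε / 2)) ^ r := by
          exact mul_le_mul_left (step_lemma hε0 hε1 h0 h1 A) _
      _ = (ENNReal.ofReal (1 - ε / 2)) ^ (r + 1) := (pow_succ' _ _).symm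

lemma eff_le_card {ε : ℝ} {p : ℕ → ℝ} (hp : IsDist p) (A : Finset ℕ)
    (hA : A.Nonempty) (hpos : ∀ i ∈ A, p i ≠ 0)
    (hout : 1 - ∑ i ∈ A, p i ≤ ε) : eff ε p ≤ A.card := by
  classical
  obtain ⟨h0, h1⟩ := hp
  have hsum : Summable p := summable_of_dist h1
  set M : ℝ := ∑ i ∈ A, p i with hM
  obtain ⟨a, ha⟩ := hA
  have hMpos : 0 < M := by
    have : 0 < p a := lt_of_le_of_ne (h0 a) (Ne.symm (hpos a ha))
    calc (0:ℝ) < p a := this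
      _ ≤ M := Finset.single_le_sum (fun i _ => h0 i) ha
  have hM1 : M ≤ 1 := h1 ▸ Summable.sum_le_tsum A (fun i _ => h0 i) hsum
  set q : ℕ → ℝ := fun i => if i ∈ A then p i / M else 0 with hq
  have hq0 : ∀ i, 0 ≤ q i := by
    intro i; by_cases h : i ∈ A <;> simp [hq, h]
    exact div_nonneg (h0 i) hMpos.le
  have hq1 : ∑' i, q i = 1 := by
    rw [tsum_eq_sum (s := A) (fun x hx => by simp [hq, hx])]
    simp only [hq]
    rw [Finset.sum_congr rfl (fun x hx => if_pos hx), ← Finset.sum_div, ← hM,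
      div_self (ne_of_gt hMpos)]
  have hsupp : {i | q i ≠ 0} = (↑A : Set ℕ) := by
    ext i
    by_cases h : i ∈ A
    · simp only [hq, Set.mem_setOf_eq, if_pos h, Finset.coe_mem, h, Finset.mem_coe,
        iff_true]
      exact div_ne_zero (hpos i h) (ne_of_gt hMpos)
    · simp [hq, h]
  have habs : ∀ i, |p i - q i| = if i ∈ A then p i / M - p i else p i := by
    intro i
    by_cases h : i ∈ A
    · simp only [hq, if_pos h]
      rw [abs_of_nonpos]
      · ring
      · have : p i ≤ p i / M := by
          rw [le_div_iff₀ hMpos]; nlinarith [h0 i]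
        linarith
    · simp only [hq, if_neg h, sub_zero, abs_of_nonneg (h0 i)]
  have hdtv : dTV p q ≤ ε := by
    rw [dTV]
    have hf : (fun i => |p i - q i|) = fun i => (if i ∈ A then p i / M - p i else 0) +
        (if i ∈ A then 0 else p i) := by
      funext i; rw [habs]; by_cases h : i ∈ A <;> simp [h]
    have hs1 : Summable (fun i => if i ∈ A then p i / M - p i else (0:ℝ)) :=
      summable_of_ne_finset_zero (s := A) (fun x hx => by simp [hx])
    have hs2 : Summable (fun i => if i ∈ A then (0:ℝ) else p i) := by
      apply Summable.of_nonneg_of_le (fun i => by by_cases h : i ∈ A <;> simp [h, h0 i])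
        (fun i => by by_cases h : i ∈ A <;> simp [h, h0 i]) hsum
    rw [hf, Summable.tsum_add hs1 hs2]
    have e1 : (∑' i, if i ∈ A then p i / M - p i else (0:ℝ)) = 1 - M := by
      rw [tsum_eq_sum (s := A) (fun x hx => by simp [hx]),
        Finset.sum_congr rfl (fun x hx => if_pos hx)]
      rw [Finset.sum_sub_distrib, ← Finset.sum_div, ← hM, div_self (ne_of_gt hMpos)]
    have e2 : (∑' i, if i ∈ A then (0:ℝ) else p i) = 1 - M := by
      have hind : Summable (fun i => if i ∈ A then p i else (0:ℝ)) :=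
        summable_of_ne_finset_zero (s := A) (fun x hx => by simp [hx])
      have hfe : (fun i => if i ∈ A then (0:ℝ) else p i) =
          fun i => p i - (if i ∈ A then p i else 0) := by
        funext i; by_cases h : i ∈ A <;> simp [h]
      rw [hfe, Summable.tsum_sub hsum hind, h1,
        tsum_eq_sum (s := A) (fun x hx => by simp [hx]),
        Finset.sum_congr rfl (fun x hx => if_pos hx)]
    rw [e1, e2]
    linarith
  apply Nat.sInf_le
  exact ⟨q, ⟨hq0, hq1⟩, by rw [hsupp]; exact_mod_cast Set.encard_coe_eq_coe_finsetCard A, hdtv⟩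

lemma numeric_bound (n : ℕ) (hn : 1 ≤ n) (ε : ℝ) (hε0 : 0 < ε) (hε1 : ε < 1) :
    (2:ℝ) ^ (n-1) * (1 - ε/2) ^ (⌈10 * (n:ℝ) / ε⌉₊) ≤ 1/4 := by
  set m := ⌈10 * (n:ℝ) / ε⌉₊ with hm
  have hmge : 10 * (n:ℝ) / ε ≤ m := Nat.le_ceil _
  have h05 : (0:ℝ) ≤ 1 - ε/2 := by linarith
  have hexp : (1 - ε/2 : ℝ) ≤ Real.exp (-(ε/2)) := by
    linarith [Real.add_one_le_exp (-(ε/2))]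
  have h2 : (1 - ε/2)^m ≤ Real.exp (-(ε/2))^m := pow_le_pow_left₀ h05 hexp m
  have h3 : Real.exp (-(ε/2))^m = Real.exp (-(ε/2) * m) := by
    rw [← Real.exp_nat_mul]; ring_nf
  have h4 : -(ε/2) * m ≤ -5 * n := by
    have : 10 * (n:ℝ) ≤ ε * m := by
      rw [div_le_iff₀ hε0] at hmge; linarith
    linarith
  have h5 : Real.exp (-(ε/2) * m) ≤ Real.exp (-5 * n) := Real.exp_le_exp.mpr h4
  have h6 : Real.exp (-5 * n) = Real.exp (-5) ^ n := by
    rw [← Real.exp_nat_mul]; ring_nf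
  have he1 : (2:ℝ) ≤ Real.exp 1 := by
    have := Real.exp_one_gt_d9; linarith
  have he5 : (4:ℝ) ≤ Real.exp 5 := by
    have h15 : Real.exp 5 = Real.exp 1 ^ (5:ℕ) := by rw [← Real.exp_nat_mul]; norm_num
    have : (2:ℝ)^(5:ℕ) ≤ Real.exp 1 ^ (5:ℕ) := pow_le_pow_left₀ (by norm_num) he1 _
    rw [h15]; norm_num at this ⊢; linarith
  have hkey : (2:ℝ)^(n-1) * Real.exp (-5)^n ≤ 1/4 := by
    obtain ⟨k, rfl⟩ : ∃ k, n = k + 1 := ⟨n - 1, by omega⟩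
    simp only [Nat.add_sub_cancel]
    have hbase : (0:ℝ) ≤ 2 * Real.exp (-5) := by positivity
    have hbase1 : 2 * Real.exp (-5) ≤ 1/2 := by
      rw [Real.exp_neg]
      rw [mul_comm, inv_mul_le_iff₀ (by positivity)]
      nlinarith [Real.exp_pos (5:ℝ)]
    have hpow : (2 * Real.exp (-5))^(k+1) ≤ (2 * Real.exp (-5))^1 :=
      pow_le_pow_of_le_one hbase (by linarith) (by omega)
    have hrw : (2:ℝ)^k * Real.exp (-5)^(k+1) = (2 * Real.exp (-5))^(k+1) / 2 := by
      rw [mul_pow]; ring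
    rw [hrw]
    rw [pow_one] at hpow
    have : (2 * Real.exp (-5))^(k+1) / 2 ≤ (1/2) / 2 := by
      apply div_le_div_of_nonneg_right _ (by norm_num)
      · exact le_trans hpow hbase1
    linarith
  calc (2:ℝ)^(n-1) * (1 - ε/2)^m ≤ (2:ℝ)^(n-1) * Real.exp (-5)^n := by
        apply mul_le_mul_of_nonneg_left _ (by positivity)
        calc (1 - ε/2)^m ≤ Real.exp (-(ε/2))^m := h2
          _ = Real.exp (-(ε/2) * m) := h3
          _ ≤ Real.exp (-5 * n) := h5
          _ = Real.exp (-5)^n := h6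
    _ ≤ 1/4 := hkey

/-- With `m := ⌈10n/ε⌉` i.i.d. samples from `p` and `Ŝ` the number of distinct
sampled values: with probability at least `3/4`, `min{eff_ε(p), n} ≤ Ŝ ≤ |supp(p)|`;
moreover `Ŝ ≤ |supp(p)|` holds almost surely. -/
theorem naive_estimator (n : ℕ) (hn : 1 ≤ n) (ε : ℝ) (hε0 : 0 < ε) (hε1 : ε < 1)
    (p : ℕ → ℝ) (hp : IsDist p) :
    Measure.pi (fun _ : Fin ⌈10 * (n : ℝ) / ε⌉₊ => distMeasure p)
        {s | min (eff ε p) n ≤ (Finset.univ.image s).card ∧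
          ((Finset.univ.image s).card : ℕ∞) ≤ {i | p i ≠ 0}.encard} ≥ 3 / 4 ∧
      ∀ᵐ s ∂(Measure.pi (fun _ : Fin ⌈10 * (n : ℝ) / ε⌉₊ => distMeasure p)),
        ((Finset.univ.image s).card : ℕ∞) ≤ {i | p i ≠ 0}.encard := by
  classical
  obtain ⟨h0, h1⟩ := hp
  set m := ⌈10 * (n : ℝ) / ε⌉₊ with hmdef
  haveI : IsProbabilityMeasure (distMeasure p) := ⟨distMeasure_univ p h0 h1⟩
  set μ := Measure.pi (fun _ : Fin m => distMeasure p) with hμ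
  haveI : IsProbabilityMeasure μ := by rw [hμ]; infer_instance
  have hm1 : 1 ≤ m := by
    rw [hmdef]
    rw [Nat.one_le_ceil_iff]
    have : (1:ℝ) ≤ (n:ℝ) := by exact_mod_cast hn
    positivity
  have hw : ∀ S : Set (Fin m → ℕ),
      μ S = ∑' s : S, ∏ j, ENNReal.ofReal (p ((s : Fin m → ℕ) j)) := by
    intro S
    rw [hμ, measure_eq_tsum']
    apply tsum_congr
    intro s
    rw [pi_singleton]
    exact Finset.prod_congr rfl (fun j _ => distMeasure_singleton p _)
  -- the null set
  set N : Set (Fin m → ℕ) := {s | ∃ j, p (s j) = 0} with hNdef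
  have hN : μ N = 0 := by
    rw [hw]
    apply ENNReal.tsum_eq_zero.mpr
    rintro ⟨s, j, hj⟩
    apply Finset.prod_eq_zero (Finset.mem_univ j)
    simp [hj]
  -- as upper bound off N
  have hAS : ∀ s : Fin m → ℕ, s ∉ N →
      ((Finset.univ.image s).card : ℕ∞) ≤ {i | p i ≠ 0}.encard := by
    intro s hs
    have hsub : (↑(Finset.univ.image s) : Set ℕ) ⊆ {i | p i ≠ 0} := by
      intro i hi
      simp only [Finset.coe_image, Finset.coe_univ, Set.image_univ, Set.mem_range] at hi
      obtain ⟨j, rfl⟩ := hi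
      exact fun h => hs ⟨j, h⟩
    calc ((Finset.univ.image s).card : ℕ∞)
        = (↑(Finset.univ.image s) : Set ℕ).encard :=
          (Set.encard_coe_eq_coe_finsetCard _).symm
      _ ≤ _ := Set.encard_mono hsub
  -- the bad set
  set Bad : Set (Fin m → ℕ) := {s | newCount ε p ∅ (List.ofFn s) < n} with hBdef
  have hhalf : ((2:ℝ≥0∞)⁻¹) = ENNReal.ofReal (1/2) := by
    rw [ENNReal.ofReal_div_of_pos] <;> norm_num
  have hmono : ∀ {a b : ℕ}, a ≤ b → (2⁻¹:ℝ≥0∞)^b ≤ (2⁻¹:ℝ≥0∞)^a := by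
    intro a b h
    rw [hhalf, ← ENNReal.ofReal_pow (by norm_num), ← ENNReal.ofReal_pow (by norm_num)]
    exact ENNReal.ofReal_le_ofReal (pow_le_pow_of_le_one (by norm_num) (by norm_num) h)
  have hBad : μ Bad ≤ 1/4 := by
    have hstep : ∀ s : Fin m → ℕ, s ∈ Bad →
        (∏ j, ENNReal.ofReal (p (s j))) ≤
          (2:ℝ≥0∞)^(n-1) * ((∏ j, ENNReal.ofReal (p (s j))) *
            (2⁻¹:ℝ≥0∞)^(newCount ε p ∅ (List.ofFn s))) := by
      intro s hs
      have hnc : newCount ε p ∅ (List.ofFn s) ≤ n - 1 := by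
        have := hs; simp only [hBdef, Set.mem_setOf_eq] at this; omega
      have h1' : (1:ℝ≥0∞) = (2:ℝ≥0∞)^(n-1) * (2⁻¹:ℝ≥0∞)^(n-1) := by
        rw [← ENNReal.inv_pow, ENNReal.mul_inv_cancel (by positivity) (by simp)]
      calc (∏ j, ENNReal.ofReal (p (s j)))
          = (∏ j, ENNReal.ofReal (p (s j))) * 1 := (mul_one _).symm
        _ ≤ (∏ j, ENNReal.ofReal (p (s j))) *
            ((2:ℝ≥0∞)^(n-1) * (2⁻¹:ℝ≥0∞)^(newCount ε p ∅ (List.ofFn s))) := by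
            apply mul_le_mul_right
            rw [h1']
            exact mul_le_mul_right (hmono hnc) _
        _ = (2:ℝ≥0∞)^(n-1) * ((∏ j, ENNReal.ofReal (p (s j))) *
            (2⁻¹:ℝ≥0∞)^(newCount ε p ∅ (List.ofFn s))) := by ring
    calc μ Bad = ∑' s : Bad, ∏ j, ENNReal.ofReal (p ((s : Fin m → ℕ) j)) := hw Bad
      _ ≤ ∑' s : Bad, (2:ℝ≥0∞)^(n-1) * ((∏ j, ENNReal.ofReal (p ((s : Fin m → ℕ) j))) *
          (2⁻¹:ℝ≥0∞)^(newCount ε p ∅ (List.ofFn (s : Fin m → ℕ)))) :=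
          ENNReal.tsum_le_tsum (fun s => hstep s s.2)
      _ = (2:ℝ≥0∞)^(n-1) * ∑' s : Bad, ((∏ j, ENNReal.ofReal (p ((s : Fin m → ℕ) j))) *
          (2⁻¹:ℝ≥0∞)^(newCount ε p ∅ (List.ofFn (s : Fin m → ℕ)))) := ENNReal.tsum_mul_left
      _ ≤ (2:ℝ≥0∞)^(n-1) * ∑' s : Fin m → ℕ, ((∏ j, ENNReal.ofReal (p (s j))) *
          (2⁻¹:ℝ≥0∞)^(newCount ε p ∅ (List.ofFn s))) := by
          apply mul_le_mul_right
          exact Summable.tsum_le_tsum_of_inj (↑) Subtype.val_injective (fun _ _ => zero_le)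
            (fun _ => le_rfl) ENNReal.summable ENNReal.summable
      _ ≤ (2:ℝ≥0∞)^(n-1) * (ENNReal.ofReal (1 - ε / 2))^m :=
          mul_le_mul_right (main_bound hε0 hε1 h0 h1 m ∅) _
      _ = ENNReal.ofReal ((2:ℝ)^(n-1) * (1 - ε/2)^m) := by
          rw [ENNReal.ofReal_mul (by positivity), ENNReal.ofReal_pow (by norm_num),
            ENNReal.ofReal_pow (by linarith), ENNReal.ofReal_ofNat]
      _ ≤ ENNReal.ofReal (1/4) := ENNReal.ofReal_le_ofReal (numeric_bound n hn ε hε0 hε1)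
      _ = 1/4 := by rw [ENNReal.ofReal_div_of_pos] <;> norm_num
  -- the good event implies the target property
  set T : Set (Fin m → ℕ) := {s | min (eff ε p) n ≤ (Finset.univ.image s).card ∧
      ((Finset.univ.image s).card : ℕ∞) ≤ {i | p i ≠ 0}.encard} with hTdef
  have hT : ∀ s : Fin m → ℕ, s ∉ Bad → s ∉ N → s ∈ T := by
    intro s hsB hsN
    set A : Finset ℕ := Finset.univ.image s with hAdef
    have hAtoF : (List.ofFn s).toFinset = A := by
      ext i
      simp [List.mem_toFinset, List.mem_ofFn, Set.mem_range, hAdef, Finset.mem_image,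
        eq_comm]
    refine ⟨?_, hAS s hsN⟩
    by_cases hout : outM p A ≤ ε
    · have hne : A.Nonempty :=
        ⟨s ⟨0, by omega⟩, Finset.mem_image_of_mem _ (Finset.mem_univ _)⟩
      have heff : eff ε p ≤ A.card := by
        apply eff_le_card ⟨h0, h1⟩ A hne
        · intro i hi
          obtain ⟨j, _, rfl⟩ := Finset.mem_image.mp hi
          exact fun h => hsN ⟨j, h⟩
        · rw [outM] at hout; exact hout
      exact le_trans (min_le_left _ _) heff
    · have hout' : ε < outM p (∅ ∪ (List.ofFn s).toFinset) := by
        rw [Finset.empty_union, hAtoF]; exact not_le.mp hout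
      have hcount := newCount_eq ε p h0 (List.ofFn s) ∅ hout'
      rw [Finset.empty_union, hAtoF, Finset.card_empty] at hcount
      have hnB : n ≤ newCount ε p ∅ (List.ofFn s) := by
        by_contra hcon
        exact hsB (by simp only [hBdef, Set.mem_setOf_eq]; omega)
      refine le_trans (min_le_right _ _) ?_
      rw [← hAdef]
      omega
  have hTc : Tᶜ ⊆ Bad ∪ N := by
    intro s hs
    by_cases h1' : s ∈ Bad
    · exact Or.inl h1'
    by_cases h2' : s ∈ N
    · exact Or.inr h2'
    exact absurd (hT s h1' h2') hs
  have hμTc : μ Tᶜ ≤ 1/4 := by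
    calc μ Tᶜ ≤ μ (Bad ∪ N) := measure_mono hTc
      _ ≤ μ Bad + μ N := measure_union_le _ _
      _ ≤ 1/4 + 0 := add_le_add hBad (le_of_eq hN)
      _ = 1/4 := add_zero _
  constructor
  · -- μ T ≥ 3/4
    have hcover : (1:ℝ≥0∞) ≤ μ T + μ Tᶜ := by
      have : μ Set.univ ≤ μ T + μ Tᶜ := by
        rw [← Set.union_compl_self T]
        exact measure_union_le _ _
      rwa [measure_univ] at this
    have h34 : (3/4 : ℝ≥0∞) + 1/4 = 1 := by
      rw [ENNReal.div_add_div_same]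
      norm_num
      exact ENNReal.div_self (by norm_num) (by norm_num)
    have : (3/4 : ℝ≥0∞) + 1/4 ≤ μ T + 1/4 := by
      rw [h34]
      exact le_trans hcover (add_le_add le_rfl hμTc)
    exact (ENNReal.add_le_add_iff_right (by norm_num : (1/4:ℝ≥0∞) ≠ ⊤)).mp this
  · rw [Filter.eventually_iff, mem_ae_iff]
    apply measure_mono_null _ hN
    intro s hs
    simp only [Set.mem_compl_iff, Set.mem_setOf_eq] at hs
    by_contra hcon
    exact hs (hAS s hcon)
end

section
/- For every natural number d and every γ ∈ [0,1], T_d(1+γ) ≥ (1/2)·exp((d/2)·√γ). -/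
/-- The degree-`d` Chebyshev polynomial of the first kind, as a real function. -/
noncomputable def cheb : ℕ → ℝ → ℝ
  | 0, _ => 1
  | 1, x => x
  | (n+2), x => 2 * x * cheb (n+1) x - cheb n x

lemma pow_step (x a : ℝ) (h : a ^ 2 = 2 * x * a - 1) (n : ℕ) :
    a ^ (n + 2) = 2 * x * a ^ (n + 1) - a ^ n := by
  have : a ^ (n + 2) = a ^ n * a ^ 2 := by ring
  rw [this, h]; ring

lemma cheb_closed (x : ℝ) (hx : 1 ≤ x) (d : ℕ) :
    cheb d x = ((x + Real.sqrt (x ^ 2 - 1)) ^ d + (x - Real.sqrt (x ^ 2 - 1)) ^ d) / 2 := by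
  set r := Real.sqrt (x ^ 2 - 1) with hr
  have hr2 : r ^ 2 = x ^ 2 - 1 := Real.sq_sqrt (by nlinarith)
  have h1 : (x + r) ^ 2 = 2 * x * (x + r) - 1 := by nlinarith
  have h2 : (x - r) ^ 2 = 2 * x * (x - r) - 1 := by nlinarith
  induction d using Nat.twoStepInduction with
  | zero => simp [cheb]
  | one => simp [cheb]
  | more n ih1 ih2 =>
    rw [cheb, ih1, ih2, pow_step x _ h1 n, pow_step x _ h2 n]
    ring

/-- For every natural number `d` and every `γ ∈ [0,1]`,
`T_d(1+γ) ≥ (1/2)·exp((d/2)·√γ)`. -/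
theorem cheb_tail_lower_bound (d : ℕ) (γ : ℝ) (hγ : γ ∈ Set.Icc (0:ℝ) 1) :
    cheb d (1 + γ) ≥ (1/2) * Real.exp ((d / 2) * Real.sqrt γ) := by
  obtain ⟨h0, h1⟩ := hγ
  set x : ℝ := 1 + γ with hx
  have hx1 : (1:ℝ) ≤ x := by simp [hx]; linarith
  set r := Real.sqrt (x ^ 2 - 1) with hr
  have hr0 : 0 ≤ r := Real.sqrt_nonneg _
  have hr2 : r ^ 2 = x ^ 2 - 1 := Real.sq_sqrt (by nlinarith)
  have hxr : 0 ≤ x - r := by nlinarith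
  have hs := Real.sqrt_nonneg γ
  have hs2 : (Real.sqrt γ) ^ 2 = γ := Real.sq_sqrt h0
  have hs1 : Real.sqrt γ ≤ 1 := by
    nlinarith [Real.sqrt_nonneg γ]
  -- r ≥ √γ
  have hrs : Real.sqrt γ ≤ r := by
    have : γ ≤ x ^ 2 - 1 := by nlinarith
    calc Real.sqrt γ ≤ Real.sqrt (x ^ 2 - 1) := Real.sqrt_le_sqrt this
    _ = r := rfl
  -- exp (√γ / 2) ≤ 1 + √γ ≤ x + r
  have key : Real.exp (Real.sqrt γ / 2) ≤ x + r := by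
    set t := Real.sqrt γ
    have hlt : 0 < 1 - t / 2 := by linarith
    have h := Real.add_one_le_exp (-(t / 2))
    have hexp : Real.exp (t / 2) ≤ 1 / (1 - t / 2) := by
      rw [le_div_iff₀ hlt]
      calc Real.exp (t / 2) * (1 - t / 2) ≤ Real.exp (t / 2) * Real.exp (-(t / 2)) := by
            apply mul_le_mul_of_nonneg_left (by linarith) (Real.exp_pos _).le
      _ = 1 := by rw [← Real.exp_add]; simp
    have h2 : 1 / (1 - t / 2) ≤ 1 + t := by
      rw [div_le_iff₀ hlt]; nlinarith
    have h3 : (1:ℝ) + t ≤ x + r := by simp [hx]; nlinarith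
    linarith
  -- main bound
  rw [cheb_closed x hx1 d, ← hr]
  have hpow : Real.exp ((d / 2) * Real.sqrt γ) ≤ (x + r) ^ d := by
    have : Real.exp ((d / 2) * Real.sqrt γ) = (Real.exp (Real.sqrt γ / 2)) ^ d := by
      rw [← Real.exp_nat_mul]; ring_nf
    rw [this]
    exact pow_le_pow_left₀ (Real.exp_pos _).le key d
  have hnn : 0 ≤ (x - r) ^ d := pow_nonneg hxr d
  have := hpow
  linarith [hnn, hpow]
end
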